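/- Consider the scalar delay equation e'(t) = −a·e(t) + b·e(t−τ) with a > |b| ≥ 0 and constant delay τ ≥ 0 satisfying τ < (a − |b|)/(|b|·(a + |b|)) (interpreted as no constraint when b = 0). Then every solution satisfies e(t) → 0 as t → ∞. -/

import Mathlib

/-!
With `V = e²`, the equation and `2|xy| ≤ x² + y²` give the Halanay inequality
`V' ≤ -(2a - |b|) V + |b| V(t - τ)`, and `2a - |b| > |b|` because `a > |b|`.
Choose `γ > 0` with `γ + |b| e^{γτ} < 2a - |b|`. Then `V` stays below `C e^{-γt}`: at a first
contact time `t₀` the history bound `V(t₀ - τ) ≤ e^{γτ} C e^{-γt₀}` makes `V` decrease strictly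
faster than `C e^{-γt}`, contradicting the contact from below.
-/

open Filter Set Real Topology

lemma HasDerivAt.nonneg_of_eventually_le_left {g : ℝ → ℝ} {g' x : ℝ} (hg : HasDerivAt g g' x)
    (h : ∀ᶠ t in 𝓝[<] x, g t ≤ g x) : 0 ≤ g' := by
  have hslope : Tendsto (slope g x) (𝓝[<] x) (𝓝 g') :=
    (hasDerivAt_iff_tendsto_slope.mp hg).mono_left (nhdsWithin_mono _ fun _ ht => ne_of_lt ht)
  refine ge_of_tendsto hslope ?_
  filter_upwards [h, self_mem_nhdsWithin] with t hle hlt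
  rw [slope_def_field]
  exact div_nonneg_of_nonpos (sub_nonpos.2 hle) (sub_nonpos.2 (le_of_lt hlt))

lemma exists_pos_add_mul_exp_lt {α β : ℝ} (τ : ℝ) (hβα : β < α) :
    ∃ γ, 0 < γ ∧ γ + β * exp (γ * τ) < α := by
  have hcont : ContinuousAt (fun γ : ℝ => γ + β * exp (γ * τ)) 0 := by fun_prop
  have hnear : ∀ᶠ γ in 𝓝 (0 : ℝ), γ + β * exp (γ * τ) < α :=
    hcont.eventually_lt continuousAt_const (by simpa using hβα)
  obtain ⟨γ, hγ, hγ0⟩ :=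
    ((hnear.filter_mono nhdsWithin_le_nhds).and (self_mem_nhdsWithin (s := Ioi 0))).exists
  exact ⟨γ, hγ0, hγ⟩

section Halanay

variable {V : ℝ → ℝ} {α β τ : ℝ}

theorem lt_mul_exp_of_deriv_le_of_delay {γ C : ℝ} (hV : Differentiable ℝ V)
    (hVineq : ∀ t, deriv V t ≤ -α * V t + β * V (t - τ)) (hβ : 0 ≤ β) (hτ : 0 ≤ τ)
    (hγα : γ + β * exp (γ * τ) < α) (hC : 0 < C)
    (hinit : ∀ t ∈ Icc (-τ) 0, V t < C * exp (-γ * t)) {t : ℝ} (ht : 0 ≤ t) :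
    V t < C * exp (-γ * t) := by
  set W : ℝ → ℝ := fun t => C * exp (-γ * t)
  by_contra! htW
  set S : Set ℝ := Ici 0 ∩ {t | W t ≤ V t}
  have hSbdd : BddBelow S := ⟨0, fun _ hs => hs.1⟩
  have ht₀S : sInf S ∈ S :=
    (isClosed_Ici.inter (isClosed_le (by fun_prop) hV.continuous)).csInf_mem ⟨t, ht, htW⟩ hSbdd
  set t₀ := sInf S
  have hbelow : ∀ s ∈ Ico (-τ) t₀, V s < W s := by
    rintro s ⟨hs, hst₀⟩
    rcases le_or_gt s 0 with hs0 | hs0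
    · exact hinit s ⟨hs, hs0⟩
    · by_contra! hWV
      exact (csInf_le hSbdd ⟨hs0.le, hWV⟩).not_gt hst₀
  have ht₀ : 0 < t₀ := lt_of_le_of_ne ht₀S.1 fun h =>
    (hinit 0 ⟨neg_nonpos.2 hτ, le_rfl⟩).not_ge (h ▸ ht₀S.2)
  have hcontact : V t₀ = W t₀ := by
    refine le_antisymm ?_ ht₀S.2
    have hgap : ContinuousAt (fun s => W s - V s) t₀ := by
      have := hV.continuous; fun_prop
    refine sub_nonneg.1 <|
      ge_of_tendsto (hgap.tendsto.mono_left (nhdsWithin_le_nhds (s := Iio t₀))) ?_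
    filter_upwards [Ioo_mem_nhdsLT ht₀] with s hs
    exact sub_nonneg.2 (hbelow s ⟨by linarith [hs.1], hs.2⟩).le
  have hle : ∀ s ∈ Icc (-τ) t₀, V s ≤ W s := by
    rintro s ⟨hs, hst₀⟩
    rcases hst₀.lt_or_eq with hlt | rfl
    · exact (hbelow s ⟨hs, hlt⟩).le
    · exact hcontact.le
  have hW' : HasDerivAt W (-γ * W t₀) t₀ :=
    (((hasDerivAt_id t₀).const_mul (-γ)).exp.const_mul C).congr_deriv (by simp only [W, id]; ring)
  -- `V - W` is negative just before `t₀` and nonnegative at `t₀`, so its derivative is `≥ 0` ...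
  have hderiv_nonneg : 0 ≤ deriv V t₀ - -γ * W t₀ := by
    refine (hV t₀).hasDerivAt.fun_sub hW' |>.nonneg_of_eventually_le_left ?_
    filter_upwards [Ioo_mem_nhdsLT ht₀] with s hs
    have := hbelow s ⟨by linarith [hs.1], hs.2⟩
    linarith
  -- ... while the delayed inequality and the history bound make it negative.
  have hWpos : 0 < W t₀ := by positivity
  have hdelay : W (t₀ - τ) = exp (γ * τ) * W t₀ := by
    simp only [W]
    rw [show -γ * (t₀ - τ) = γ * τ + -γ * t₀ by ring, exp_add]
    ring
  have hhist : V (t₀ - τ) ≤ exp (γ * τ) * W t₀ :=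
    hdelay ▸ hle _ ⟨by linarith, by linarith⟩
  have hderiv_neg : deriv V t₀ < -γ * W t₀ :=
    calc deriv V t₀ ≤ -α * W t₀ + β * (exp (γ * τ) * W t₀) := by
          linarith [hcontact ▸ hVineq t₀, mul_le_mul_of_nonneg_left hhist hβ]
      _ < -γ * W t₀ := by nlinarith
  linarith

/-- Halanay's inequality. -/
theorem tendsto_zero_of_deriv_le_of_delay (hV : Differentiable ℝ V) (hV0 : ∀ t, 0 ≤ V t)
    (hVineq : ∀ t, deriv V t ≤ -α * V t + β * V (t - τ)) (hβ : 0 ≤ β) (hβα : β < α)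
    (hτ : 0 ≤ τ) : Tendsto V atTop (𝓝 0) := by
  obtain ⟨γ, hγ, hγα⟩ := exists_pos_add_mul_exp_lt τ hβα
  obtain ⟨K, hK⟩ := isCompact_Icc.exists_bound_of_continuousOn
    (hV.continuous.continuousOn (s := Icc (-τ) 0))
  have hK0 : 0 ≤ K := (norm_nonneg _).trans (hK 0 ⟨neg_nonpos.2 hτ, le_rfl⟩)
  have hinit : ∀ t ∈ Icc (-τ) 0, V t < (K + 1) * exp (-γ * t) := by
    intro t ht
    have hexp : 1 ≤ exp (-γ * t) := one_le_exp (by nlinarith [ht.2])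
    calc V t ≤ K := (le_abs_self _).trans (hK t ht)
      _ < (K + 1) * 1 := by linarith
      _ ≤ (K + 1) * exp (-γ * t) := by gcongr
  have hW : Tendsto (fun t => (K + 1) * exp (-γ * t)) atTop (𝓝 0) := by
    simpa using (tendsto_exp_atBot.comp
      (tendsto_id.const_mul_atTop_of_neg (neg_lt_zero.2 hγ))).const_mul (K + 1)
  refine squeeze_zero' (Eventually.of_forall hV0) ?_ hW
  filter_upwards [eventually_ge_atTop 0] with t ht
  exact (lt_mul_exp_of_deriv_le_of_delay hV hVineq hβ hτ hγα (by linarith) hinit ht).le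

end Halanay

lemma deriv_sq_le_of_deriv_eq_delay {a b τ : ℝ} {e : ℝ → ℝ} (he : Differentiable ℝ e)
    (hODE : ∀ t, deriv e t = -a * e t + b * e (t - τ)) (t : ℝ) :
    deriv (fun s => e s ^ 2) t ≤ -(2 * a - |b|) * e t ^ 2 + |b| * e (t - τ) ^ 2 := by
  have hderiv : deriv (fun s => e s ^ 2) t = 2 * e t * (-a * e t + b * e (t - τ)) := by
    rw [((he t).hasDerivAt.fun_pow 2).deriv, hODE t]
    ring
  have hcross : 2 * b * (e t * e (t - τ)) ≤ |b| * (e t ^ 2 + e (t - τ) ^ 2) :=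
    calc 2 * b * (e t * e (t - τ)) ≤ |2 * b * (e t * e (t - τ))| := le_abs_self _
      _ = |b| * (2 * |e t| * |e (t - τ)|) := by simp only [abs_mul, abs_two]; ring
      _ ≤ |b| * (|e t| ^ 2 + |e (t - τ)| ^ 2) := by gcongr; exact two_mul_le_add_sq _ _
      _ = |b| * (e t ^ 2 + e (t - τ) ^ 2) := by rw [sq_abs, sq_abs]
  rw [hderiv]
  linarith

theorem stmt_15_general (a b τ : ℝ) (ha : |b| < a) (hτ : 0 ≤ τ)
    (e : ℝ → ℝ) (he : Differentiable ℝ e)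
    (hODE : ∀ t, deriv e t = -a * e t + b * e (t - τ)) :
    Tendsto e atTop (nhds 0) := by
  have hsq : Tendsto (fun t => e t ^ 2) atTop (𝓝 0) :=
    tendsto_zero_of_deriv_le_of_delay (he.pow 2) (fun t => sq_nonneg (e t))
      (deriv_sq_le_of_deriv_eq_delay he hODE) (abs_nonneg b) (by linarith) hτ
  rw [tendsto_zero_iff_abs_tendsto_zero]
  simpa [sqrt_sq_eq_abs, Function.comp_def] using hsq.sqrt

/-- Scalar prototype of the delay-stability result: for `e'(t) = -a e(t) + b e(t-τ)`
with `a > |b|` and small enough delay, every solution tends to zero. -/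
theorem stmt_15 (a b τ : ℝ) (ha : |b| < a) (hτ : 0 ≤ τ)
    (hτb : b ≠ 0 → τ < (a - |b|) / (|b| * (a + |b|)))
    (e : ℝ → ℝ) (he : Differentiable ℝ e)
    (hODE : ∀ t, deriv e t = -a * e t + b * e (t - τ)) :
    Tendsto e atTop (nhds 0) :=
  stmt_15_general a b τ ha hτ e he hODE
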